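/- Let (T,F) be a graph-labelled tree whose accessibility graph G is connected, and let v be an internal node of T. Then every maximal subtree of T − v contains a leaf l such that v is l-accessible. -/

import Mathlib

open SimpleGraph

variable {V : Type}

/-- A vertex of a tree is a leaf if it has exactly one neighbour. -/
def IsLeaf (T : SimpleGraph V) (v : V) : Prop := ∃! w, T.Adj v w

/-- Admissibility of a walk in a graph-labelled tree: at every internal vertex of the
walk, the marker vertices corresponding to the two consecutive tree-edges are adjacent
in the label graph. -/
inductive Admissible (T : SimpleGraph V) (F : ∀ v : V, SimpleGraph (T.neighborSet v)) :
    ∀ {a b : V}, T.Walk a b → Prop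
  | nil {a : V} : Admissible T F (SimpleGraph.Walk.nil : T.Walk a a)
  | single {a b : V} (h : T.Adj a b) :
      Admissible T F (SimpleGraph.Walk.cons h SimpleGraph.Walk.nil)
  | cons {a v b c : V} (h1 : T.Adj a v) (h2 : T.Adj v b) (p : T.Walk b c)
      (hadj : (F v).Adj ⟨a, h1.symm⟩ ⟨b, h2⟩)
      (hp : Admissible T F (SimpleGraph.Walk.cons h2 p)) :
      Admissible T F (SimpleGraph.Walk.cons h1 (SimpleGraph.Walk.cons h2 p))

/-- `b` is accessible from `a`: the (unique) path joining them is admissible. -/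
def Accessible (T : SimpleGraph V) (F : ∀ v : V, SimpleGraph (T.neighborSet v))
    (a b : V) : Prop :=
  ∃ p : T.Walk a b, p.IsPath ∧ Admissible T F p

/-- The accessibility graph of a graph-labelled tree: vertices are the leaves of the
tree, two leaves being adjacent iff one is accessible from the other. -/
def accGraph (T : SimpleGraph V) (F : ∀ v : V, SimpleGraph (T.neighborSet v)) :
    SimpleGraph {v : V // IsLeaf T v} :=
  SimpleGraph.fromRel (fun x y => Accessible T F ↑x ↑y)

/-! Every branch of a finite tree at `v` contains a leaf, so `v` separates a leaf of the branch
at `u` from a leaf of another branch. Along a path of the connected accessibility graph between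
them some edge `ab` leaves the branch at `u`; the admissible tree path from `a` to `b` then
passes through `v`, and its initial segment up to `v` is still admissible. -/

section Admissible

variable {T : SimpleGraph V} {F : ∀ v : V, SimpleGraph (T.neighborSet v)}

lemma admissible_cons_cons_iff {a v b c : V} (h1 : T.Adj a v) (h2 : T.Adj v b)
    (p : T.Walk b c) :
    Admissible T F (.cons h1 (.cons h2 p)) ↔
      (F v).Adj ⟨a, h1.symm⟩ ⟨b, h2⟩ ∧ Admissible T F (.cons h2 p) :=
  ⟨fun h => by cases h with | cons _ _ _ hadj hp => exact ⟨hadj, hp⟩,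
    fun h => .cons h1 h2 p h.1 h.2⟩

lemma Admissible.of_append_left {a b c : V} {p : T.Walk a b} {q : T.Walk b c}
    (hadm : Admissible T F (p.append q)) : Admissible T F p := by
  induction p with
  | nil => exact .nil
  | cons h p ih =>
    cases p with
    | nil => exact .single h
    | cons h' p =>
      rw [Walk.cons_append, Walk.cons_append, admissible_cons_cons_iff] at hadm
      exact .cons h h' p hadm.1 (ih hadm.2)

lemma Admissible.concat_concat {a b c d : V} {p : T.Walk a b} {h1 : T.Adj b c}
    {h2 : T.Adj c d} (hadm : Admissible T F (p.concat h1))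
    (hadj : (F c).Adj ⟨b, h1.symm⟩ ⟨d, h2⟩) :
    Admissible T F ((p.concat h1).concat h2) := by
  induction p with
  | nil => exact .cons h1 h2 .nil hadj (.single h2)
  | cons h p ih =>
    cases p with
    | nil =>
      obtain ⟨hadj', -⟩ := (admissible_cons_cons_iff _ _ _).1 hadm
      exact .cons h h1 _ hadj' (ih (.single h1) hadj)
    | cons h' p =>
      obtain ⟨hadj', hp⟩ := (admissible_cons_cons_iff _ _ _).1 hadm
      exact .cons h h' _ hadj' (ih hp hadj)

lemma Admissible.reverse {a b : V} {p : T.Walk a b} (hadm : Admissible T F p) :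
    Admissible T F p.reverse := by
  induction hadm with
  | nil => exact .nil
  | single h => exact .single h.symm
  | cons h1 h2 p hadj _ ih =>
    rw [Walk.reverse_cons, ← Walk.concat_eq_append] at ih ⊢
    rw [Walk.reverse_cons, ← Walk.concat_eq_append]
    exact ih.concat_concat hadj.symm

lemma Accessible.symm {a b : V} (hab : Accessible T F a b) : Accessible T F b a :=
  let ⟨p, hp, hadm⟩ := hab
  ⟨p.reverse, hp.reverse, hadm.reverse⟩

lemma Accessible.of_forall_mem_support [DecidableEq V] {a b v : V}
    (hab : Accessible T F a b) (hv : ∀ p : T.Walk a b, v ∈ p.support) :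
    Accessible T F a v := by
  obtain ⟨p, hp, hadm⟩ := hab
  rw [← p.take_spec (hv p)] at hadm
  exact ⟨_, hp.takeUntil (hv p), hadm.of_append_left⟩

end Admissible

section Branch

variable {T : SimpleGraph V}

lemma exists_adj_ne_of_not_isLeaf {v u : V} (hv : ¬ IsLeaf T v) (hu : T.Adj v u) :
    ∃ u', T.Adj v u' ∧ u' ≠ u := by
  by_contra! h
  exact hv ⟨u, hu, h⟩

lemma SimpleGraph.IsAcyclic.exists_adj_not_mem_support (hac : T.IsAcyclic) {w x : V}
    {q : T.Walk w x} (hq : q.IsPath) (hwx : w ≠ x) (hx : ¬ IsLeaf T x) :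
    ∃ y, T.Adj x y ∧ y ∉ q.support := by
  obtain ⟨y, hxy, hy⟩ :=
    exists_adj_ne_of_not_isLeaf hx (q.adj_penultimate (Walk.not_nil_of_ne hwx)).symm
  exact ⟨y, hxy, fun hyq => hy (hac.eq_penultimate_of_adj_end hq hxy hyq)⟩

lemma SimpleGraph.IsAcyclic.exists_isLeaf_append_isPath [Fintype V] (hac : T.IsAcyclic)
    {w x : V} (q : T.Walk w x) (hq : q.IsPath) (hwx : w ≠ x) :
    ∃ l, IsLeaf T l ∧ ∃ p : T.Walk x l, (q.append p).IsPath := by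
  by_cases hx : IsLeaf T x
  · exact ⟨x, hx, .nil, by rwa [Walk.append_nil]⟩
  obtain ⟨y, hxy, hyq⟩ := hac.exists_adj_not_mem_support hq hwx hx
  have hlen : Fintype.card V - (q.concat hxy).length < Fintype.card V - q.length := by
    have := (hq.concat hyq hxy).length_lt
    rw [Walk.length_concat] at this ⊢
    omega
  obtain ⟨l, hl, p, hp⟩ :=
    hac.exists_isLeaf_append_isPath (q.concat hxy) (hq.concat hyq hxy)
      fun h => hyq (h ▸ q.start_mem_support)
  exact ⟨l, hl, .cons hxy p, by rwa [← Walk.concat_append]⟩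
termination_by Fintype.card V - q.length

/-- For `u` adjacent to `v` in a tree, this is the maximal subtree of `T - v` containing `u`. -/
def branch (T : SimpleGraph V) (v u : V) : Set V := {x | ∃ p : T.Walk u x, v ∉ p.support}

lemma mem_support_of_mem_branch_of_not_mem_branch {v u x y : V} (hx : x ∈ branch T v u)
    (hy : y ∉ branch T v u) (p : T.Walk x y) : v ∈ p.support := by
  obtain ⟨q, hq⟩ := hx
  by_contra hp
  exact hy ⟨q.append p, by rw [Walk.mem_support_append_iff]; tauto⟩

lemma SimpleGraph.IsAcyclic.exists_isLeaf_mem_branch [Fintype V] (hac : T.IsAcyclic)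
    {v u : V} (hu : T.Adj v u) : ∃ l, IsLeaf T l ∧ l ∈ branch T v u := by
  obtain ⟨l, hl, p, hp⟩ :=
    hac.exists_isLeaf_append_isPath (.cons hu .nil) (by simp [hu.ne]) hu.ne
  exact ⟨l, hl, p, ((Walk.cons_isPath_iff _ _).1 hp).2⟩

lemma SimpleGraph.IsAcyclic.not_mem_branch [DecidableEq V] (hac : T.IsAcyclic) {v u u' x : V}
    (hu : T.Adj v u) (hu' : T.Adj v u') (hne : u ≠ u') (hx : x ∈ branch T v u') :
    x ∉ branch T v u := by
  rintro ⟨p, hp⟩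
  obtain ⟨q, hq⟩ := hx
  have hvr : v ∉ (p.append q.reverse).bypass.support := fun h => by
    have := (p.append q.reverse).support_bypass_subset_support h
    simp only [Walk.mem_support_append_iff, Walk.support_reverse, List.mem_reverse] at this
    tauto
  have hu'_mem : u' ∈ (Walk.cons hu.symm .nil : T.Walk u v).support :=
    hac.mem_support_of_ne_mem_support_of_adj_of_isPath (Path.singleton hu.symm).2
      (Walk.bypass_isPath _) hu' hvr
  rw [Walk.support_cons, Walk.support_nil, List.mem_cons, List.mem_singleton] at hu'_mem
  exact hu'_mem.elim (fun h => hne h.symm) fun h => hu'.ne h.symm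

end Branch

/-- if the accessibility graph is connected and `v` is an internal node,
then every maximal subtree of `T - v` (the one containing a given neighbour `u` of `v`)
contains a leaf `l` from which `v` is accessible. -/
theorem stmt1 [Fintype V] (T : SimpleGraph V) (hT : T.IsTree)
    (F : ∀ v : V, SimpleGraph (T.neighborSet v))
    (hconn : (accGraph T F).Connected)
    (v : V) (hv : ¬ IsLeaf T v) (u : V) (hu : T.Adj v u) :
    ∃ l : V, IsLeaf T l ∧ Accessible T F l v ∧
      ∃ p : T.Walk u l, v ∉ p.support := by
  classical
  obtain ⟨u', hu', hu'u⟩ := exists_adj_ne_of_not_isLeaf hv hu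
  obtain ⟨l₀, hl₀, hl₀u⟩ := hT.isAcyclic.exists_isLeaf_mem_branch hu
  obtain ⟨l₁, hl₁, hl₁u'⟩ := hT.isAcyclic.exists_isLeaf_mem_branch hu'
  have hl₁u : l₁ ∉ branch T v u := hT.isAcyclic.not_mem_branch hu hu' hu'u.symm hl₁u'
  obtain ⟨w⟩ := hconn ⟨l₀, hl₀⟩ ⟨l₁, hl₁⟩
  obtain ⟨⟨⟨a, b⟩, hab⟩, -, ha, hb⟩ :=
    w.exists_boundary_dart (Subtype.val ⁻¹' branch T v u) hl₀u hl₁u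
  have hacc : Accessible T F a b := ((fromRel_adj _ _ _).1 hab).2.elim id Accessible.symm
  exact ⟨a, a.2, hacc.of_forall_mem_support (mem_support_of_mem_branch_of_not_mem_branch ha hb),
    ha⟩
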